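/- For the exponential–exponential special case (γ₁ exponential with mean γ̄₁, γ₂ exponential with mean μ_r·λ, independent), the exact end-to-end CDF of the fixed-gain AF SNR is F(γ) = 1 − exp(−γ/γ̄₁) · ∫₀^∞ exp(−γC/(γ̄₁ x)) (1/(μ_r λ)) exp(−x/(μ_r λ)) dx for γ > 0, and F is a valid CDF: nondecreasing, F(0⁺) = 0, and F(γ) → 1 as γ → ∞. -/

import Mathlib

/-!
Conditioning on `γ₂ = y > 0`, the event `γ₁ γ₂ / (γ₂ + C) ≤ γ` is `γ₁ ≤ γ (y + C) / y`,
of probability `1 - exp (-γ / γ̄₁) exp (-γ C / (γ̄₁ y))` by the exponential CDF; integrating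
against the density of `γ₂` gives `F`. The weight `exp (-γ C / (γ̄₁ x))` lies in `[0, 1]`,
decreases in `γ` and tends to `1` as `γ → 0⁺`, so monotonicity and the two limits follow by
dominated convergence.
-/

open Real MeasureTheory Set Filter Topology ProbabilityTheory

noncomputable section

section ExponentialLaw

variable {b : ℝ}

def expLawMean (b : ℝ) : Measure ℝ :=
  volume.withDensity fun x => ENNReal.ofReal (if 0 < x then (1 / b) * exp (-x / b) else 0)

lemma integrableOn_exp_density (hb : 0 < b) :
    IntegrableOn (fun x => (1 / b) * exp (-x / b)) (Ioi 0) := by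
  have h : IntegrableOn (fun x => (1 / b) * exp (-b⁻¹ * x)) (Ioi 0) :=
    (exp_neg_integrableOn_Ioi 0 (inv_pos.2 hb)).const_mul (1 / b)
  exact h.congr_fun (fun x _ => by ring_nf) measurableSet_Ioi

lemma integral_exp_density (hb : 0 < b) : ∫ x in Ioi 0, (1 / b) * exp (-x / b) = 1 := by
  simp_rw [show ∀ x, -x / b = -b⁻¹ * x from fun x => by ring]
  rw [integral_const_mul, integral_exp_mul_Ioi (neg_lt_zero.2 (inv_pos.2 hb))]
  field_simp
  simp

lemma expLawMean_eq_expMeasure : expLawMean b = expMeasure b⁻¹ := by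
  refine withDensity_congr_ae ?_
  filter_upwards [compl_mem_ae_iff.2 (measure_singleton (μ := volume) (0 : ℝ))] with x hx
  change _ = exponentialPDF b⁻¹ x
  rw [exponentialPDF_eq]
  rcases lt_or_gt_of_ne hx with hneg | hpos
  · rw [if_neg hneg.not_gt, if_neg hneg.not_ge]
  · rw [if_pos hpos, if_pos hpos.le]
    ring_nf

lemma expLawMean_Iic (hb : 0 < b) {t : ℝ} (ht : 0 ≤ t) :
    expLawMean b (Iic t) = ENNReal.ofReal (1 - exp (-t / b)) := by
  have := isProbabilityMeasure_expMeasure (inv_pos.2 hb)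
  rw [expLawMean_eq_expMeasure, ← ofReal_cdf, cdf_expMeasure_eq (inv_pos.2 hb), if_pos ht]
  ring_nf

lemma lintegral_expLawMean {f : ℝ → ENNReal} (hf : Measurable f) :
    ∫⁻ x, f x ∂expLawMean b =
      ∫⁻ x in Ioi 0, ENNReal.ofReal ((1 / b) * exp (-x / b)) * f x := by
  rw [expLawMean, lintegral_withDensity_eq_lintegral_mul _
      ((Measurable.ite measurableSet_Ioi (by fun_prop) measurable_const).ennreal_ofReal) hf,
    ← lintegral_indicator measurableSet_Ioi]
  congr 1 with x
  by_cases hx : 0 < x <;> simp [hx]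

end ExponentialLaw

section Independence

variable {Ω α β : Type*} [MeasurableSpace Ω] [MeasurableSpace α] [MeasurableSpace β]
  {P : Measure Ω} [IsFiniteMeasure P] {X : Ω → α} {Y : Ω → β}

lemma ProbabilityTheory.IndepFun.measure_mem_eq_lintegral_map (hX : Measurable X)
    (hY : Measurable Y) (h : IndepFun X Y P) {S : Set (α × β)} (hS : MeasurableSet S) :
    P {ω | (X ω, Y ω) ∈ S} = ∫⁻ y, P.map X ((fun x => (x, y)) ⁻¹' S) ∂P.map Y := by
  rw [← Measure.prod_apply_symm hS,
    ← h.map_prod_eq_prod_map_map hX.aemeasurable hY.aemeasurable,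
    Measure.map_apply (hX.prodMk hY) hS]
  rfl

end Independence

section AFIntegral

variable {γbar C b γ x : ℝ}

def afIntegrand (γbar C b γ x : ℝ) : ℝ :=
  exp (-(γ * C) / (γbar * x)) * (1 / b) * exp (-x / b)

def afIntegral (γbar C b γ : ℝ) : ℝ :=
  ∫ x in Ioi 0, afIntegrand γbar C b γ x

lemma afIntegrand_nonneg (hb : 0 ≤ b) : 0 ≤ afIntegrand γbar C b γ x := by
  unfold afIntegrand; positivity

lemma afIntegrand_le (hb : 0 ≤ b) (hγ : 0 ≤ γ) (hC : 0 ≤ C) (hγbar : 0 ≤ γbar)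
    (hx : 0 ≤ x) :
    afIntegrand γbar C b γ x ≤ (1 / b) * exp (-x / b) := by
  have hweight : exp (-(γ * C) / (γbar * x)) ≤ 1 :=
    exp_le_one_iff.2 (by rw [neg_div]; exact neg_nonpos.2 (by positivity))
  unfold afIntegrand
  rw [mul_assoc]
  exact mul_le_of_le_one_left (by positivity) hweight

lemma antitone_afIntegrand (hb : 0 ≤ b) (hC : 0 ≤ C) (hγbar : 0 ≤ γbar) (hx : 0 ≤ x) :
    Antitone fun γ => afIntegrand γbar C b γ x := by
  intro γ γ' hle
  simp only [afIntegrand]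
  gcongr

lemma integrableOn_afIntegrand (hb : 0 < b) (hγ : 0 ≤ γ) (hC : 0 ≤ C) (hγbar : 0 ≤ γbar) :
    IntegrableOn (afIntegrand γbar C b γ) (Ioi 0) := by
  refine (integrableOn_exp_density hb).mono' (by unfold afIntegrand; fun_prop) ?_
  filter_upwards [ae_restrict_mem measurableSet_Ioi] with x hx
  rw [Real.norm_of_nonneg (afIntegrand_nonneg hb.le)]
  exact afIntegrand_le hb.le hγ hC hγbar (le_of_lt hx)

lemma afIntegral_nonneg (hb : 0 ≤ b) : 0 ≤ afIntegral γbar C b γ :=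
  integral_nonneg fun _ => afIntegrand_nonneg hb

lemma afIntegral_le_one (hb : 0 < b) (hγ : 0 ≤ γ) (hC : 0 ≤ C) (hγbar : 0 ≤ γbar) :
    afIntegral γbar C b γ ≤ 1 := by
  rw [← integral_exp_density hb]
  exact setIntegral_mono_on (integrableOn_afIntegrand hb hγ hC hγbar)
    (integrableOn_exp_density hb) measurableSet_Ioi
    fun x hx => afIntegrand_le hb.le hγ hC hγbar (le_of_lt hx)

lemma antitoneOn_afIntegral (hb : 0 < b) (hC : 0 ≤ C) (hγbar : 0 ≤ γbar) :
    AntitoneOn (afIntegral γbar C b) (Ici 0) := fun _ hγ _ hγ' hle =>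
  setIntegral_mono_on (integrableOn_afIntegrand hb hγ' hC hγbar)
    (integrableOn_afIntegrand hb hγ hC hγbar) measurableSet_Ioi
    fun _ hx => antitone_afIntegrand hb.le hC hγbar (le_of_lt hx) hle

lemma tendsto_afIntegral_nhdsGT_zero (hb : 0 < b) (hC : 0 ≤ C) (hγbar : 0 ≤ γbar) :
    Tendsto (afIntegral γbar C b) (𝓝[>] 0) (𝓝 1) := by
  rw [← integral_exp_density hb]
  refine tendsto_integral_filter_of_dominated_convergence _
    (Eventually.of_forall fun γ => by unfold afIntegrand; fun_prop)
    ?_ (integrableOn_exp_density hb) ?_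
  · filter_upwards [self_mem_nhdsWithin] with γ hγ
    filter_upwards [ae_restrict_mem measurableSet_Ioi] with x hx
    rw [Real.norm_of_nonneg (afIntegrand_nonneg hb.le)]
    exact afIntegrand_le hb.le (le_of_lt hγ) hC hγbar (le_of_lt hx)
  · refine Eventually.of_forall fun x => ?_
    have hcont : Continuous fun γ => afIntegrand γbar C b γ x := by unfold afIntegrand; fun_prop
    simpa [afIntegrand] using hcont.continuousAt.tendsto.mono_left (nhdsWithin_le_nhds (a := 0))

end AFIntegral

section AFCDF

variable {γbar C b : ℝ}

def afCDF (γbar C b γ : ℝ) : ℝ :=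
  1 - exp (-γ / γbar) * afIntegral γbar C b γ

lemma monotoneOn_afCDF (hb : 0 < b) (hC : 0 ≤ C) (hγbar : 0 ≤ γbar) :
    MonotoneOn (afCDF γbar C b) (Ici 0) := by
  intro γ hγ γ' hγ' hle
  have hexp : exp (-γ' / γbar) ≤ exp (-γ / γbar) := by gcongr
  have := mul_le_mul hexp (antitoneOn_afIntegral hb hC hγbar hγ hγ' hle)
    (afIntegral_nonneg hb.le) (exp_pos _).le
  unfold afCDF
  linarith

lemma tendsto_afCDF_nhdsGT_zero (hb : 0 < b) (hC : 0 ≤ C) (hγbar : 0 ≤ γbar) :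
    Tendsto (afCDF γbar C b) (𝓝[>] 0) (𝓝 0) := by
  have hexp : Tendsto (fun γ => exp (-γ / γbar)) (𝓝[>] 0) (𝓝 1) := by
    have hcont : Continuous fun γ => exp (-γ / γbar) := by fun_prop
    simpa using hcont.continuousAt.tendsto.mono_left (nhdsWithin_le_nhds (a := (0 : ℝ)))
  have h := (hexp.mul (tendsto_afIntegral_nhdsGT_zero hb hC hγbar)).const_sub 1
  rwa [mul_one, sub_self] at h

lemma tendsto_afCDF_atTop (hb : 0 < b) (hC : 0 ≤ C) (hγbar : 0 < γbar) :
    Tendsto (afCDF γbar C b) atTop (𝓝 1) := by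
  have hexp : Tendsto (fun γ => exp (-γ / γbar)) atTop (𝓝 0) :=
    tendsto_exp_atBot.comp (tendsto_neg_atTop_atBot.atBot_div_const hγbar)
  have hbounded : IsBoundedUnder (· ≤ ·) atTop fun γ => ‖afIntegral γbar C b γ‖ := by
    refine isBoundedUnder_of_eventually_le (a := 1) ?_
    filter_upwards [eventually_ge_atTop 0] with γ hγ
    rw [Real.norm_of_nonneg (afIntegral_nonneg hb.le)]
    exact afIntegral_le_one hb hγ hC hγbar.le
  have h := (hexp.zero_mul_isBoundedUnder_le hbounded).const_sub 1
  rwa [sub_zero] at h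

end AFCDF

theorem measure_afSNR_le_eq_afCDF {Ω : Type*} [MeasurableSpace Ω] {P : Measure Ω}
    [IsFiniteMeasure P] {X Y : Ω → ℝ} {γbar C b γ : ℝ}
    (hX : Measurable X) (hY : Measurable Y) (hXY : IndepFun X Y P)
    (hXlaw : P.map X = expLawMean γbar) (hYlaw : P.map Y = expLawMean b)
    (hγbar : 0 < γbar) (hb : 0 < b) (hC : 0 ≤ C) (hγ : 0 ≤ γ) :
    (P {ω | X ω * Y ω / (Y ω + C) ≤ γ}).toReal = afCDF γbar C b γ := by
  set S : Set (ℝ × ℝ) := {p | p.1 * p.2 / (p.2 + C) ≤ γ}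
  have hS : MeasurableSet S := measurableSet_le (by fun_prop) measurable_const
  have hsection : ∀ y, 0 < y → (fun x => (x, y)) ⁻¹' S = Iic (γ * (y + C) / y) := by
    intro y hy
    ext x
    simp only [S, mem_preimage, mem_ofPred_eq, mem_Iic]
    rw [div_le_iff₀ (by positivity), le_div_iff₀ hy]
  let G : ℝ → ℝ := fun y => (1 / b) * exp (-y / b) * (1 - exp (-(γ * (y + C) / y) / γbar))
  have hG : ∀ y ∈ Ioi (0 : ℝ),
      G y = (1 / b) * exp (-y / b) - exp (-γ / γbar) * afIntegrand γbar C b γ y := by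
    intro y (hy : 0 < y)
    have hexp : exp (-(γ * (y + C) / y) / γbar)
        = exp (-γ / γbar) * exp (-(γ * C) / (γbar * y)) := by
      rw [← exp_add]; congr 1; field_simp; ring
    simp only [G, afIntegrand, hexp]
    ring
  have hG_nonneg : 0 ≤ᵐ[volume.restrict (Ioi 0)] G := by
    filter_upwards [ae_restrict_mem measurableSet_Ioi] with y (hy : 0 < y)
    have hcdf : exp (-(γ * (y + C) / y) / γbar) ≤ 1 :=
      exp_le_one_iff.2 (by rw [neg_div]; exact neg_nonpos.2 (by positivity))
    exact mul_nonneg (by positivity) (sub_nonneg.2 hcdf)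
  have hlintegral :
      P {ω | X ω * Y ω / (Y ω + C) ≤ γ} = ∫⁻ y in Ioi 0, ENNReal.ofReal (G y) := by
    rw [show {ω | X ω * Y ω / (Y ω + C) ≤ γ} = {ω | (X ω, Y ω) ∈ S} from rfl,
      hXY.measure_mem_eq_lintegral_map hX hY hS, hYlaw,
      lintegral_expLawMean (measurable_measure_prodMk_right hS), hXlaw]
    refine setLIntegral_congr_fun measurableSet_Ioi fun y (hy : 0 < y) => ?_
    rw [hsection y hy, expLawMean_Iic hγbar (by positivity),
      ← ENNReal.ofReal_mul (by positivity)]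
  rw [hlintegral, ← integral_eq_lintegral_of_nonneg_ae hG_nonneg (by fun_prop),
    setIntegral_congr_fun measurableSet_Ioi hG, integral_sub (integrableOn_exp_density hb)
      ((integrableOn_afIntegrand hb hγ hC hγbar.le).const_mul _),
    integral_exp_density hb, integral_const_mul]
  rfl

theorem exp_exp_fg_af_cdf
    {Ω : Type*} [MeasureSpace Ω] (P : Measure Ω) [IsProbabilityMeasure P]
    (g1 g2 : Ω → ℝ) (γbar1 μr lam C : ℝ)
    (hγbar1 : 0 < γbar1) (hμr : 0 < μr) (hlam : 0 < lam) (hC : 0 < C)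
    (hg1 : Measurable g1) (hg2 : Measurable g2)
    (hindep : ProbabilityTheory.IndepFun g1 g2 P)
    (hdist1 : Measure.map g1 P = MeasureTheory.volume.withDensity
      (fun x => ENNReal.ofReal (if 0 < x then (1 / γbar1) * Real.exp (-x / γbar1) else 0)))
    (hdist2 : Measure.map g2 P = MeasureTheory.volume.withDensity
      (fun x => ENNReal.ofReal (if 0 < x then (1 / (μr * lam)) * Real.exp (-x / (μr * lam)) else 0)))
    (F : ℝ → ℝ)
    (hF : ∀ γ : ℝ, F γ = 1 - Real.exp (-γ / γbar1) *
      ∫ x in Ioi (0:ℝ),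
        Real.exp (-(γ * C) / (γbar1 * x)) * (1 / (μr * lam)) *
          Real.exp (-x / (μr * lam))) :
    (∀ γ : ℝ, 0 < γ →
        (P {ω | g1 ω * g2 ω / (g2 ω + C) ≤ γ}).toReal = F γ) ∧
    MonotoneOn F (Ioi 0) ∧
    Filter.Tendsto F (nhdsWithin 0 (Ioi 0)) (nhds 0) ∧
    Filter.Tendsto F Filter.atTop (nhds 1) := by
  have hb : 0 < μr * lam := mul_pos hμr hlam
  obtain rfl : F = afCDF γbar1 C (μr * lam) := funext hF
  exact ⟨fun γ hγ =>
      measure_afSNR_le_eq_afCDF hg1 hg2 hindep hdist1 hdist2 hγbar1 hb hC.le hγ.le,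
    (monotoneOn_afCDF hb hC.le hγbar1.le).mono Ioi_subset_Ici_self,
    tendsto_afCDF_nhdsGT_zero hb hC.le hγbar1.le,
    tendsto_afCDF_atTop hb hC.le hγbar1⟩
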